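/- If the counterfactual outcome Y_x is conditionally independent of X given Z, then the ETT is a mixture of z-specific total effects: ETT_{x0,x1}(y|x) = Σ_z z-TE_{x0,x1}(y|z) P(z|x); consequently, vanishing of all z-specific total effects implies vanishing of the ETT for every x. -/

import Mathlib

/-!
Conditioning on `X = x` and splitting along the fibres of `Z` (law of total probability) gives
`P(Y | x) = Σ_z P(Y | x, z) P(z | x)`, and conditional independence replaces `P(Y | x, z)` by
`P(Y | z)`. Subtracting the two instances for `Y_{x1}` and `Y_{x0}` yields the mixture formula.
-/

open MeasureTheory ProbabilityTheory

section TotalProbability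

variable {Ω α : Type*} [MeasurableSpace Ω] [Fintype α]

theorem cond_eq_sum_cond_inter_fiber_mul (μ : Measure Ω) [IsFiniteMeasure μ] {Z : Ω → α}
    (hZ : ∀ z, MeasurableSet (Z ⁻¹' {z})) {A : Set Ω} (hA : MeasurableSet A) (Y : Set Ω) :
    μ[Y | A] = ∑ z, μ[Y | A ∩ Z ⁻¹' {z}] * μ[Z ⁻¹' {z} | A] := by
  let : MeasurableSpace α := ⊤
  conv_lhs => rw [← sum_meas_smul_cond_fiber (measurable_to_countable' hZ) μ[|A]]
  simp only [Measure.coe_finsetSum, Measure.coe_smul, Finset.sum_apply, Pi.smul_apply,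
    smul_eq_mul, cond_cond_eq_cond_inter hA (hZ _), mul_comm]

theorem toReal_cond_eq_sum_of_cond_inter_fiber_eq (μ : Measure Ω) [IsFiniteMeasure μ]
    {Z : Ω → α} (hZ : ∀ z, MeasurableSet (Z ⁻¹' {z})) {A : Set Ω} (hA : MeasurableSet A)
    {Y : Set Ω} (hY : ∀ z, μ[Y | A ∩ Z ⁻¹' {z}] = μ[Y | Z ⁻¹' {z}]) :
    μ[Y | A].toReal = ∑ z, μ[Y | Z ⁻¹' {z}].toReal * μ[Z ⁻¹' {z} | A].toReal := by
  rw [cond_eq_sum_cond_inter_fiber_mul μ hZ hA Y, ENNReal.toReal_sum]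
  · simp only [hY, ENNReal.toReal_mul]
  · exact fun z _ ↦ ENNReal.mul_ne_top (measure_ne_top _ _) (measure_ne_top _ _)

end TotalProbability

theorem ett_mixture_of_zte_general {Ω SX SZ : Type*} [MeasurableSpace Ω]
    [Fintype SZ]
    (μ : Measure Ω) [IsProbabilityMeasure μ]
    (X : Ω → SX) (Z : Ω → SZ)
    (hXmeas : ∀ x : SX, MeasurableSet (X ⁻¹' {x}))
    (hZmeas : ∀ z : SZ, MeasurableSet (Z ⁻¹' {z}))
    (Yx0 Yx1 : Set Ω)
    -- conditional independence of the potential outcomes and X given Z: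
    (hCI0 : ∀ (x : SX) (z : SZ),
      ProbabilityTheory.cond μ (X ⁻¹' {x} ∩ Z ⁻¹' {z}) Yx0
        = ProbabilityTheory.cond μ (Z ⁻¹' {z}) Yx0)
    (hCI1 : ∀ (x : SX) (z : SZ),
      ProbabilityTheory.cond μ (X ⁻¹' {x} ∩ Z ⁻¹' {z}) Yx1
        = ProbabilityTheory.cond μ (Z ⁻¹' {z}) Yx1)
    (zTE : SZ → ℝ)
    (hzTE : ∀ z, zTE z = (ProbabilityTheory.cond μ (Z ⁻¹' {z}) Yx1).toReal
        - (ProbabilityTheory.cond μ (Z ⁻¹' {z}) Yx0).toReal)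
    (ETT : SX → ℝ)
    (hETT : ∀ x, ETT x = (ProbabilityTheory.cond μ (X ⁻¹' {x}) Yx1).toReal
        - (ProbabilityTheory.cond μ (X ⁻¹' {x}) Yx0).toReal) :
    (∀ x : SX, ETT x = ∑ z : SZ,
        zTE z * (ProbabilityTheory.cond μ (X ⁻¹' {x}) (Z ⁻¹' {z})).toReal)
      ∧ ((∀ z : SZ, zTE z = 0) → ∀ x : SX, ETT x = 0) := by
  have hmix (x : SX) : ETT x = ∑ z : SZ,
      zTE z * (ProbabilityTheory.cond μ (X ⁻¹' {x}) (Z ⁻¹' {z})).toReal := by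
    rw [hETT x,
      toReal_cond_eq_sum_of_cond_inter_fiber_eq μ hZmeas (hXmeas x) (hCI1 x),
      toReal_cond_eq_sum_of_cond_inter_fiber_eq μ hZmeas (hXmeas x) (hCI0 x),
      ← Finset.sum_sub_distrib]
    simp only [hzTE, sub_mul]
  exact ⟨hmix, fun hzero x ↦ by simp [hmix x, hzero]⟩

/-- If the counterfactual outcomes `Y_{x0}, Y_{x1}` are conditionally
independent of `X` given `Z` (expressed via equality of conditional
probabilities), then the ETT is a mixture of `z`-specific total effects:
`ETT_{x0,x1}(y|x) = Σ_z z-TE_{x0,x1}(y|z) P(Z=z|X=x)`; consequently, if all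
`z`-specific total effects vanish then the ETT vanishes for every `x`. -/
theorem ett_mixture_of_zte {Ω SX SZ : Type*} [MeasurableSpace Ω]
    [Fintype SX] [Fintype SZ]
    (μ : Measure Ω) [IsProbabilityMeasure μ]
    (X : Ω → SX) (Z : Ω → SZ)
    (hXmeas : ∀ x : SX, MeasurableSet (X ⁻¹' {x}))
    (hZmeas : ∀ z : SZ, MeasurableSet (Z ⁻¹' {z}))
    (Yx0 Yx1 : Set Ω) (hY0 : MeasurableSet Yx0) (hY1 : MeasurableSet Yx1)
    (hpos : ∀ (x : SX) (z : SZ), 0 < μ (X ⁻¹' {x} ∩ Z ⁻¹' {z}))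
    -- conditional independence of the potential outcomes and X given Z:
    (hCI0 : ∀ (x : SX) (z : SZ),
      ProbabilityTheory.cond μ (X ⁻¹' {x} ∩ Z ⁻¹' {z}) Yx0
        = ProbabilityTheory.cond μ (Z ⁻¹' {z}) Yx0)
    (hCI1 : ∀ (x : SX) (z : SZ),
      ProbabilityTheory.cond μ (X ⁻¹' {x} ∩ Z ⁻¹' {z}) Yx1
        = ProbabilityTheory.cond μ (Z ⁻¹' {z}) Yx1)
    (zTE : SZ → ℝ)
    (hzTE : ∀ z, zTE z = (ProbabilityTheory.cond μ (Z ⁻¹' {z}) Yx1).toReal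
        - (ProbabilityTheory.cond μ (Z ⁻¹' {z}) Yx0).toReal)
    (ETT : SX → ℝ)
    (hETT : ∀ x, ETT x = (ProbabilityTheory.cond μ (X ⁻¹' {x}) Yx1).toReal
        - (ProbabilityTheory.cond μ (X ⁻¹' {x}) Yx0).toReal) :
    (∀ x : SX, ETT x = ∑ z : SZ,
        zTE z * (ProbabilityTheory.cond μ (X ⁻¹' {x}) (Z ⁻¹' {z})).toReal)
      ∧ ((∀ z : SZ, zTE z = 0) → ∀ x : SX, ETT x = 0) :=
  ett_mixture_of_zte_general μ X Z hXmeas hZmeas Yx0 Yx1 hCI0 hCI1 zTE hzTE ETT hETT
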